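/- For all t > 0, log((1+t)/(2*sqrt(t))) ≤ (1/8) * (t-1)^2 / t. -/

import Mathlib

/-!
Write `t = s²`. By `log x ≤ x - 1` the left side is at most
`(1 + s²)/(2s) - 1 = (s - 1)²/(2s)`, while the right side equals
`(s - 1)²/(2s) · (s + 1)²/(4s)`, and `(s + 1)² ≥ 4s` is AM-GM.
-/

open Real

lemma one_add_sq_div_two_mul_sub_one_le {s : ℝ} (hs : 0 < s) :
    (1 + s ^ 2) / (2 * s) - 1 ≤ (1 / 8) * ((s ^ 2 - 1) ^ 2 / s ^ 2) := by
  have am_gm : 4 * s ≤ (s + 1) ^ 2 := by nlinarith [sq_nonneg (s - 1)]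
  have lhs_eq : (1 + s ^ 2) / (2 * s) - 1 = (s - 1) ^ 2 / (2 * s) := by
    field_simp
    ring
  have rhs_eq :
      (1 / 8) * ((s ^ 2 - 1) ^ 2 / s ^ 2) = (s - 1) ^ 2 / (2 * s) * ((s + 1) ^ 2 / (4 * s)) := by
    field_simp
    ring
  rw [lhs_eq, rhs_eq]
  refine le_mul_of_one_le_right (by positivity) ?_
  rwa [one_le_div (by positivity)]

lemma log_one_add_sq_div_two_mul_le {s : ℝ} (hs : 0 < s) :
    log ((1 + s ^ 2) / (2 * s)) ≤ (1 / 8) * ((s ^ 2 - 1) ^ 2 / s ^ 2) :=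
  (log_le_sub_one_of_pos (by positivity)).trans (one_add_sq_div_two_mul_sub_one_le hs)

/-- For all t > 0, log((1+t)/(2√t)) ≤ (1/8)·(t-1)²/t. -/
theorem stmt0 (t : ℝ) (ht : 0 < t) :
    Real.log ((1 + t) / (2 * Real.sqrt t)) ≤ (1 / 8) * ((t - 1) ^ 2 / t) := by
  have h := log_one_add_sq_div_two_mul_le (sqrt_pos.mpr ht)
  rwa [sq_sqrt ht.le] at h
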